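/- arXiv:1810.04806 — 4 statements merged into one kernel-verified Lean document; each statement's English description precedes it below -/
import Mathlib

section
/- Let X ~ F be a positive random variable with survival function S(x)=1−F(x) and left limit S(x−). Define the backward operator (Rg)(x) = (1/S(x)) ∫_x^∞ g(t) dF(t) and the forward operator (Ag)(x) = g(x) − (Rg)(x) for g ∈ L²(F). Assume Efron–Johnstone's identity Var(g(X)) = E[ (S(X)/S(X−)) (Ag)(X)² ] holds. Then E[ (S(X)/S(X−)) (Rg)(X)² ] ≤ 4 E[ g(X)² ]. -/
/-!
Write `c = S/S⁻ ∈ [0, 1]`. Since `Rg = g - Ag`, pointwise `c (Rg)² ≤ 2 c g² + 2 c (Ag)²`.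
Integrating, the first term is at most `2 E[g²]` because `c ≤ 1`, and by the Efron–Johnstone
identity the second is `2 Var(g(X)) ≤ 2 E[g²]`.
-/

open MeasureTheory Set

section Weighted

variable {α : Type*} [MeasurableSpace α] {μ : Measure α}

theorem integral_mul_sq_le_two_mul_add_two_mul {c g h : α → ℝ} (hc : AEStronglyMeasurable c μ)
    (hc0 : ∀ x, 0 ≤ c x) (hc1 : ∀ x, c x ≤ 1) (hg : MemLp g 2 μ)
    (hh : AEStronglyMeasurable h μ) :
    ∫ x, c x * h x ^ 2 ∂μ ≤ 2 * ∫ x, g x ^ 2 ∂μ + 2 * ∫ x, c x * (g x - h x) ^ 2 ∂μ := by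
  have hg2 : Integrable (fun x => g x ^ 2) μ := hg.integrable_sq
  have hcg2 : Integrable (fun x => c x * g x ^ 2) μ :=
    hg2.bdd_mul (c := 1) hc (Filter.Eventually.of_forall fun x => by
      rw [Real.norm_eq_abs, abs_of_nonneg (hc0 x)]; exact hc1 x)
  have hsq : ∀ x a b, c x * (a - b) ^ 2 ≤ 2 * (c x * a ^ 2) + 2 * (c x * b ^ 2) := fun x a b => by
    nlinarith [mul_nonneg (hc0 x) (sq_nonneg (a + b))]
  by_cases hch2 : Integrable (fun x => c x * h x ^ 2) μ
  swap
  · rw [integral_undef hch2]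
    have : 0 ≤ ∫ x, c x * (g x - h x) ^ 2 ∂μ :=
      integral_nonneg fun x => mul_nonneg (hc0 x) (sq_nonneg _)
    positivity
  have hcd : Integrable (fun x => c x * (g x - h x) ^ 2) μ := by
    refine ((hcg2.const_mul 2).add (hch2.const_mul 2)).mono'
      (hc.mul ((hg.aestronglyMeasurable.sub hh).pow 2)) (Filter.Eventually.of_forall fun x => ?_)
    rw [Real.norm_eq_abs, abs_of_nonneg (mul_nonneg (hc0 x) (sq_nonneg _))]
    exact hsq x (g x) (h x)
  calc ∫ x, c x * h x ^ 2 ∂μ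
      ≤ ∫ x, 2 * (c x * g x ^ 2) + 2 * (c x * (g x - h x) ^ 2) ∂μ :=
        integral_mono hch2 ((hcg2.const_mul 2).add (hcd.const_mul 2)) fun x => by
          simpa using hsq x (g x) (g x - h x)
    _ = 2 * ∫ x, c x * g x ^ 2 ∂μ + 2 * ∫ x, c x * (g x - h x) ^ 2 ∂μ := by
        rw [integral_add (hcg2.const_mul 2) (hcd.const_mul 2), integral_const_mul,
          integral_const_mul]
    _ ≤ 2 * ∫ x, g x ^ 2 ∂μ + 2 * ∫ x, c x * (g x - h x) ^ 2 ∂μ := by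
        have := integral_mono hcg2 hg2 fun x => mul_le_of_le_one_left (sq_nonneg _) (hc1 x)
        linarith

theorem integral_sub_integral_sq_le [IsProbabilityMeasure μ] {g : α → ℝ}
    (hg : AEMeasurable g μ) :
    ∫ x, (g x - ∫ y, g y ∂μ) ^ 2 ∂μ ≤ ∫ x, g x ^ 2 ∂μ := by
  rw [← ProbabilityTheory.variance_eq_integral hg]
  exact ProbabilityTheory.variance_le_expectation_sq hg.aestronglyMeasurable

end Weighted

section Tail

variable {μ : Measure ℝ}

theorem antitone_setIntegral_Ioi_of_nonneg {f : ℝ → ℝ} (hf : Integrable f μ)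
    (hf0 : ∀ t, 0 ≤ f t) : Antitone fun x => ∫ t in Ioi x, f t ∂μ := fun _ _ hxy =>
  setIntegral_mono_set hf.integrableOn (Filter.Eventually.of_forall hf0)
    (Ioi_subset_Ioi hxy).eventuallyLE

theorem measurable_setIntegral_Ioi {g : ℝ → ℝ} (hg : Integrable g μ) :
    Measurable fun x => ∫ t in Ioi x, g t ∂μ := by
  have hpos : Integrable (fun t => max (g t) 0) μ := hg.pos_part
  have hneg : Integrable (fun t => max (-g t) 0) μ := hg.neg.pos_part
  have hsplit : (fun x => ∫ t in Ioi x, g t ∂μ) =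
      fun x => (∫ t in Ioi x, max (g t) 0 ∂μ) - ∫ t in Ioi x, max (-g t) 0 ∂μ := by
    funext x
    rw [← integral_sub hpos.integrableOn hneg.integrableOn]
    simp only [max_zero_sub_max_neg_zero_eq_self]
  rw [hsplit]
  exact (antitone_setIntegral_Ioi_of_nonneg hpos fun _ => le_max_right _ _).measurable.sub
    (antitone_setIntegral_Ioi_of_nonneg hneg fun _ => le_max_right _ _).measurable

end Tail

theorem stmt_3_general (μ : Measure ℝ) [IsProbabilityMeasure μ]
    (S Sm : ℝ → ℝ) (hS : ∀ x, S x = (μ (Ioi x)).toReal)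
    (hSm : ∀ x, Sm x = (μ (Ici x)).toReal)
    (g : ℝ → ℝ) (hg : MemLp g 2 μ)
    (R A : ℝ → ℝ)
    (hR : ∀ x, R x = (1 / S x) * ∫ t in Ioi x, g t ∂μ)
    (hA : ∀ x, A x = g x - R x)
    (hEJ : ∫ x, (g x - ∫ y, g y ∂μ) ^ 2 ∂μ = ∫ x, (S x / Sm x) * A x ^ 2 ∂μ) :
    ∫ x, (S x / Sm x) * R x ^ 2 ∂μ ≤ 4 * ∫ x, g x ^ 2 ∂μ := by
  obtain rfl : A = fun x => g x - R x := funext hA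
  have hS_anti : Antitone S := fun x y hxy => by
    rw [hS, hS]; exact measureReal_mono (Ioi_subset_Ioi hxy)
  have hSm_anti : Antitone Sm := fun x y hxy => by
    rw [hSm, hSm]; exact measureReal_mono (Ici_subset_Ici.mpr hxy)
  have hR_meas : Measurable R := by
    rw [funext hR]
    exact (measurable_const.div hS_anti.measurable).mul
      (measurable_setIntegral_Ioi (hg.integrable one_le_two))
  have hc0 : ∀ x, 0 ≤ S x / Sm x := fun x => by
    rw [hS, hSm]; positivity
  have hc1 : ∀ x, S x / Sm x ≤ 1 := fun x => by
    rw [hS, hSm]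
    exact div_le_one_of_le₀ (measureReal_mono Ioi_subset_Ici_self) measureReal_nonneg
  calc ∫ x, (S x / Sm x) * R x ^ 2 ∂μ
      ≤ 2 * ∫ x, g x ^ 2 ∂μ + 2 * ∫ x, (S x / Sm x) * (g x - R x) ^ 2 ∂μ :=
        integral_mul_sq_le_two_mul_add_two_mul
          (hS_anti.measurable.div hSm_anti.measurable).aestronglyMeasurable hc0 hc1 hg
          hR_meas.aestronglyMeasurable
    _ ≤ 4 * ∫ x, g x ^ 2 ∂μ := by
        rw [← hEJ]
        linarith [integral_sub_integral_sq_le (μ := μ) hg.aestronglyMeasurable.aemeasurable]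

/-- The backward operator `R` satisfies `E[(S/S⁻)(Rg)²] ≤ 4 E[g²]`, assuming
the Efron–Johnstone identity `Var(g(X)) = E[(S(X)/S(X−))(Ag)(X)²]`. -/
theorem stmt_3 (μ : Measure ℝ) [IsProbabilityMeasure μ] (hsupp : μ (Iic 0) = 0)
    (S Sm : ℝ → ℝ) (hS : ∀ x, S x = (μ (Ioi x)).toReal)
    (hSm : ∀ x, Sm x = (μ (Ici x)).toReal)
    (g : ℝ → ℝ) (hg : MemLp g 2 μ)
    (R A : ℝ → ℝ)
    (hR : ∀ x, R x = (1 / S x) * ∫ t in Ioi x, g t ∂μ)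
    (hA : ∀ x, A x = g x - R x)
    (hEJ : ∫ x, (g x - ∫ y, g y ∂μ) ^ 2 ∂μ = ∫ x, (S x / Sm x) * A x ^ 2 ∂μ) :
    ∫ x, (S x / Sm x) * R x ^ 2 ∂μ ≤ 4 * ∫ x, g x ^ 2 ∂μ :=
  stmt_3_general μ S Sm hS hSm g hg R A hR hA hEJ
end

section
/- Let K(x,y) = e^{−|x−y|} (the Ornstein–Uhlenbeck kernel) and let F be the exponential(1) distribution with S(x)=e^{−x}. Then the doubly transformed kernel K'(x,y) = (A₁A₂K)(x,y) equals (1/2)(1 − |x−y|) e^{−|x−y|} for all x,y > 0. -/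
/-!
For `a ≤ c` the tail integral `∫_{t>a} e^{-|t-c|} e^{-t} dt` splits at `c` into `(c - a) e^{-c}`
and `e^{-c}/2`, while for `c ≤ a` it equals `e^{c-2a}/2`. When `y ≤ x` these evaluate both single
integrals, and the double integral reduces to `∫_{s>x} (s - y + 1/2) e^{-2s} ds = (x - y + 1) e^{-2x}/2`;
the case `x ≤ y` follows from the symmetry of the kernel and Fubini.
-/

open MeasureTheory Set Real Filter Topology

theorem integral_Ioi_exp_neg_two_mul (a : ℝ) :
    ∫ t in Ioi a, exp (-2 * t) = exp (-2 * a) / 2 := by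
  rw [integral_exp_mul_Ioi (by norm_num) a]
  ring

theorem tendsto_sub_mul_exp_neg_two_mul_atTop (b : ℝ) :
    Tendsto (fun t => (t - b) * exp (-2 * t)) atTop (𝓝 0) := by
  have h := (Polynomial.tendsto_div_exp_atTop (.X - .C b)).mul tendsto_exp_neg_atTop_nhds_zero
  rw [zero_mul] at h
  refine h.congr fun t => ?_
  simp only [Polynomial.eval_sub, Polynomial.eval_X, Polynomial.eval_C, div_eq_mul_inv,
    ← exp_neg, mul_assoc, ← exp_add]
  ring_nf

theorem integral_Ioi_sub_mul_exp_neg_two_mul {a b : ℝ} (hba : b ≤ a) :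
    ∫ t in Ioi a, (t - b) * exp (-2 * t) = (a - b + 1 / 2) * exp (-2 * a) / 2 := by
  have hderiv : ∀ t ∈ Ici a, HasDerivAt (fun t => -((t - (b - 1 / 2)) * exp (-2 * t)) / 2)
      ((t - b) * exp (-2 * t)) t := by
    intro t _
    refine ((((hasDerivAt_id t).sub_const (b - 1 / 2)).mul
      ((hasDerivAt_id t).const_mul (-2)).exp).neg.div_const 2).congr_deriv ?_
    simp only [id]
    ring
  have hnonneg : ∀ t ∈ Ioi a, 0 ≤ (t - b) * exp (-2 * t) := fun t ht =>
    mul_nonneg (by linarith [ht.out]) (exp_pos _).le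
  have hlim := ((tendsto_sub_mul_exp_neg_two_mul_atTop (b - 1 / 2)).neg.div_const 2)
  rw [neg_zero, zero_div] at hlim
  rw [integral_Ioi_of_hasDerivAt_of_nonneg' hderiv hnonneg hlim]
  ring

theorem integrableOn_exp_neg_abs_sub_mul_exp_neg (c a : ℝ) :
    IntegrableOn (fun t => exp (-|t - c|) * exp (-t)) (Ioi a) := by
  have hexp : IntegrableOn (fun t => exp (-t)) (Ioi a) := by
    simpa using exp_neg_integrableOn_Ioi a one_pos
  refine Integrable.bdd_mul (c := 1) hexp (by fun_prop) (ae_of_all _ fun t => ?_)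
  simp [abs_of_pos (exp_pos _)]

theorem integral_Ioi_exp_neg_abs_sub_mul_exp_neg_of_le {a c : ℝ} (hca : c ≤ a) :
    ∫ t in Ioi a, exp (-|t - c|) * exp (-t) = exp c * exp (-2 * a) / 2 := by
  have hcongr : EqOn (fun t => exp (-|t - c|) * exp (-t)) (fun t => exp c * exp (-2 * t))
      (Ioi a) := fun t ht => by
    dsimp only
    rw [abs_of_nonneg (by linarith [ht.out]), ← exp_add, ← exp_add]
    ring_nf
  rw [setIntegral_congr_fun measurableSet_Ioi hcongr, integral_const_mul,
    integral_Ioi_exp_neg_two_mul, mul_div_assoc]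

theorem integral_Ioi_exp_neg_abs_sub_mul_exp_neg_of_ge {a c : ℝ} (hac : a ≤ c) :
    ∫ t in Ioi a, exp (-|t - c|) * exp (-t) = (c - a + 1 / 2) * exp (-c) := by
  have hcongr : EqOn (fun t => exp (-|t - c|) * exp (-t)) (fun _ => exp (-c)) (Ioc a c) :=
    fun t ht => by
      dsimp only
      rw [abs_of_nonpos (by linarith [ht.2]), ← exp_add]
      ring_nf
  rw [← Ioc_union_Ioi_eq_Ioi hac, setIntegral_union Ioc_disjoint_Ioi_same measurableSet_Ioi
    (Continuous.integrableOn_Ioc (by fun_prop)) (integrableOn_exp_neg_abs_sub_mul_exp_neg c c),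
    setIntegral_congr_fun measurableSet_Ioc hcongr, setIntegral_const,
    Real.volume_real_Ioc_of_le hac, smul_eq_mul,
    integral_Ioi_exp_neg_abs_sub_mul_exp_neg_of_le le_rfl,
    ← exp_add]
  ring_nf

theorem integral_Ioi_integral_Ioi_exp_neg_abs_sub_of_le {x y : ℝ} (hyx : y ≤ x) :
    ∫ s in Ioi x, ∫ t in Ioi y, exp (-|s - t|) * exp (-s) * exp (-t)
      = (x - y + 1) * exp (-2 * x) / 2 := by
  have hinner : EqOn (fun s => ∫ t in Ioi y, exp (-|s - t|) * exp (-s) * exp (-t))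
      (fun s => (s - (y - 1 / 2)) * exp (-2 * s)) (Ioi x) := fun s hs => by
    dsimp only
    simp_rw [mul_right_comm _ (exp (-s)), abs_sub_comm s]
    rw [integral_mul_const, integral_Ioi_exp_neg_abs_sub_mul_exp_neg_of_ge (hyx.trans hs.out.le),
      mul_assoc, ← exp_add]
    ring_nf
  rw [setIntegral_congr_fun measurableSet_Ioi hinner,
    integral_Ioi_sub_mul_exp_neg_two_mul (by linarith)]
  ring

/-- `A₁A₂K` for `F = Exp(1)`: `1 / S(x) = e^x` and `dF(s) = e^{-s} ds`. -/
noncomputable def expTailTransform (K : ℝ → ℝ → ℝ) (x y : ℝ) : ℝ :=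
  K x y - exp x * (∫ s in Ioi x, K s y * exp (-s)) - exp y * (∫ t in Ioi y, K x t * exp (-t))
    + exp x * exp y * (∫ s in Ioi x, ∫ t in Ioi y, K s t * exp (-s) * exp (-t))

theorem expTailTransform_comm {K : ℝ → ℝ → ℝ} (hK : ∀ s t, K s t = K t s)
    (hmeas : Measurable (Function.uncurry K)) {C : ℝ} (hbdd : ∀ s t, ‖K s t‖ ≤ C) (x y : ℝ) :
    expTailTransform K x y = expTailTransform K y x := by
  have hexp (a : ℝ) : IntegrableOn (fun t => exp (-t)) (Ioi a) := by
    simpa using exp_neg_integrableOn_Ioi a one_pos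
  have hint : Integrable (Function.uncurry fun s t => K s t * exp (-s) * exp (-t))
      ((volume.restrict (Ioi x)).prod (volume.restrict (Ioi y))) := by
    refine ((hexp x).mul_prod (hexp y) |>.bdd_mul (c := C) hmeas.aestronglyMeasurable
      (ae_of_all _ fun p => hbdd p.1 p.2)).congr (ae_of_all _ fun p => ?_)
    change K p.1 p.2 * _ = K p.1 p.2 * _ * _
    ring
  have hswap : ∫ s in Ioi x, ∫ t in Ioi y, K s t * exp (-s) * exp (-t)
      = ∫ t in Ioi y, ∫ s in Ioi x, K t s * exp (-t) * exp (-s) := by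
    rw [integral_integral_swap hint]
    refine integral_congr_ae (ae_of_all _ fun t => integral_congr_ae (ae_of_all _ fun s => ?_))
    dsimp only
    rw [hK, mul_right_comm]
  have hx : (fun s => K s y * exp (-s)) = fun t => K y t * exp (-t) := funext fun s => by rw [hK]
  have hy : (fun t => K x t * exp (-t)) = fun s => K s x * exp (-s) := funext fun t => by rw [hK]
  simp only [expTailTransform, hswap, hK x y, hx, hy]
  ring

theorem expTailTransform_exp_neg_abs_sub_of_le {x y : ℝ} (hyx : y ≤ x) :
    expTailTransform (fun s t => exp (-|s - t|)) x y
      = 1 / 2 * (1 - |x - y|) * exp (-|x - y|) := by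
  have hI : ∫ t in Ioi y, exp (-|x - t|) * exp (-t) = (x - y + 1 / 2) * exp (-x) := by
    simp_rw [abs_sub_comm x]
    exact integral_Ioi_exp_neg_abs_sub_mul_exp_neg_of_ge hyx
  simp only [expTailTransform]
  rw [hI, integral_Ioi_exp_neg_abs_sub_mul_exp_neg_of_le hyx,
    integral_Ioi_integral_Ioi_exp_neg_abs_sub_of_le hyx, abs_of_nonneg (sub_nonneg.2 hyx)]
  have hxy : exp (-(x - y)) = exp y * exp (-x) := by rw [← exp_add]; ring_nf
  have h2x : exp (-2 * x) = exp (-x) * exp (-x) := by rw [← exp_add]; ring_nf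
  have hx : exp x * exp (-x) = 1 := by rw [← exp_add, add_neg_cancel, exp_zero]
  rw [hxy, h2x]
  linear_combination exp y * exp (-x) * (x - y) / 2 * hx

theorem expTailTransform_exp_neg_abs_sub (x y : ℝ) :
    expTailTransform (fun s t => exp (-|s - t|)) x y
      = 1 / 2 * (1 - |x - y|) * exp (-|x - y|) := by
  rcases le_total y x with hyx | hxy
  · exact expTailTransform_exp_neg_abs_sub_of_le hyx
  · have hbdd (s t : ℝ) : ‖exp (-|s - t|)‖ ≤ 1 := by
      simp [abs_of_pos (exp_pos _)]
    rw [expTailTransform_comm (fun s t => by rw [abs_sub_comm]) (by fun_prop) hbdd,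
      expTailTransform_exp_neg_abs_sub_of_le hxy, abs_sub_comm]

/-- For the Ornstein–Uhlenbeck kernel `K(x,y) = e^{−|x−y|}` and the exponential(1)
distribution, the transformed kernel is `K'(x,y) = (1/2)(1 − |x−y|)e^{−|x−y|}`. -/
theorem stmt_7 :
    ∀ x > (0 : ℝ), ∀ y > (0 : ℝ),
      Real.exp (-|x - y|)
        - Real.exp x * (∫ s in Ioi x, Real.exp (-|s - y|) * Real.exp (-s))
        - Real.exp y * (∫ t in Ioi y, Real.exp (-|x - t|) * Real.exp (-t))
        + Real.exp x * Real.exp y *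
            (∫ s in Ioi x, ∫ t in Ioi y,
              Real.exp (-|s - t|) * Real.exp (-s) * Real.exp (-t))
        = (1 / 2) * (1 - |x - y|) * Real.exp (-|x - y|) :=
  fun x _ y _ => expTailTransform_exp_neg_abs_sub x y
end

section
/- For γ < 1, the double integral 2∫_0^∞∫_0^∞ K'(x,y)² e^{−(1−γ)(x+y)} dx dy, where K'(x,y) = (1/2)(1 − |x−y|)e^{−|x−y|}, equals (5 − 4γ + γ²)/(2(γ−3)³(γ−1)). -/
/-!
Write the integrand as `k (x - y) * exp (-a * (x + y))` with `a = 1 - γ` and `k = K'²`. Since `k`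
is even and bounded, the integrand is symmetric and integrable on the quadrant, so by Fubini the
double integral is twice its part over `{x < y}`. Substituting `y = x + t` there factors that part
as `∫ exp (-2 a x) dx * ∫ k t * exp (-a t) dt`, and for `t > 0` the last integrand is
`(1 - t)² exp (-(3 - γ) t) / 4`, whose integral is a combination of Gamma integrals.
-/

open MeasureTheory Set Function
open scoped Nat

theorem integral_integral_eq_two_mul_integral_integral_Ioi {μ : Measure ℝ} [SFinite μ]
    [NullSingletonClass μ] {f : ℝ → ℝ → ℝ} (hf : Integrable (uncurry f) (μ.prod μ))
    (hsymm : ∀ x y, f x y = f y x) :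
    ∫ x, ∫ y, f x y ∂μ ∂μ = 2 * ∫ x, ∫ y in Ioi x, f x y ∂μ ∂μ := by
  have hle : MeasurableSet {p : ℝ × ℝ | p.2 ≤ p.1} :=
    measurableSet_le measurable_snd measurable_fst
  have hlt : MeasurableSet {p : ℝ × ℝ | p.1 < p.2} :=
    measurableSet_lt measurable_fst measurable_snd
  have hIic : ∀ x, ∫ y in Iic x, f x y ∂μ =
      ∫ y, {p : ℝ × ℝ | p.2 ≤ p.1}.indicator (uncurry f) (x, y) ∂μ := fun x => by
    rw [← integral_indicator measurableSet_Iic]; rfl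
  have hIoi : ∀ x, ∫ y in Ioi x, f x y ∂μ =
      ∫ y, {p : ℝ × ℝ | p.1 < p.2}.indicator (uncurry f) (x, y) ∂μ := fun x => by
    rw [← integral_indicator measurableSet_Ioi]; rfl
  have hswap : ∫ x, ∫ y in Iic x, f x y ∂μ ∂μ = ∫ x, ∫ y in Ioi x, f x y ∂μ ∂μ := by
    calc ∫ x, ∫ y in Iic x, f x y ∂μ ∂μ
        = ∫ y, ∫ x, {p : ℝ × ℝ | p.2 ≤ p.1}.indicator (uncurry f) (x, y) ∂μ ∂μ := by
          simp_rw [hIic]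
          exact integral_integral_swap (hf.indicator hle)
      _ = ∫ y, ∫ x in Ici y, f y x ∂μ ∂μ := by
          congr 1; ext y
          rw [← integral_indicator measurableSet_Ici]
          congr 1; ext x
          simp [indicator, hsymm x y]
      _ = ∫ x, ∫ y in Ioi x, f x y ∂μ ∂μ := by
          simp_rw [setIntegral_congr_set Ioi_ae_eq_Ici]
  calc ∫ x, ∫ y, f x y ∂μ ∂μ
      = ∫ x, (∫ y in Iic x, f x y ∂μ + ∫ y in Ioi x, f x y ∂μ) ∂μ := by
        refine integral_congr_ae (hf.prod_right_ae.mono fun x hx => ?_)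
        have hsplit := integral_add_compl (measurableSet_Iic (a := x)) hx
        rw [compl_Iic] at hsplit
        exact hsplit.symm
    _ = ∫ x, ∫ y in Iic x, f x y ∂μ ∂μ + ∫ x, ∫ y in Ioi x, f x y ∂μ ∂μ := by
        refine integral_add ?_ ?_
        · simp_rw [hIic]; exact (hf.indicator hle).integral_prod_left
        · simp_rw [hIoi]; exact (hf.indicator hlt).integral_prod_left
    _ = 2 * ∫ x, ∫ y in Ioi x, f x y ∂μ ∂μ := by rw [hswap, two_mul]

theorem setIntegral_Ioi_eq_setIntegral_Ioi_zero_add {E : Type*} [NormedAddCommGroup E]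
    [NormedSpace ℝ E] (g : ℝ → E) (x : ℝ) :
    ∫ y in Ioi x, g y = ∫ t in Ioi 0, g (t + x) := by
  have := (measurePreserving_add_right volume x).setIntegral_preimage_emb
    (measurableEmbedding_addRight x) g (Ioi x)
  simpa using this.symm

theorem integrable_prod_comp_sub_mul_exp {k : ℝ → ℝ} (hk : Continuous k) {B : ℝ}
    (hB : ∀ t, |k t| ≤ B) {a : ℝ} (ha : 0 < a) :
    Integrable (uncurry fun x y => k (x - y) * Real.exp (-a * (x + y)))
      ((volume.restrict (Ioi 0)).prod (volume.restrict (Ioi 0))) := by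
  have hexp : IntegrableOn (fun x => Real.exp (-a * x)) (Ioi 0) :=
    integrableOn_exp_mul_Ioi (by linarith) 0
  refine ((hexp.const_mul B).mul_prod hexp).mono' ?_ ?_
  · exact (by fun_prop : Continuous (uncurry fun x y => k (x - y) * Real.exp (-a * (x + y))))
      |>.aestronglyMeasurable
  · refine Filter.Eventually.of_forall fun p => ?_
    simp only [uncurry, Real.norm_eq_abs, abs_mul, Real.abs_exp]
    rw [mul_assoc, ← Real.exp_add, mul_add]
    exact mul_le_mul_of_nonneg_right (hB _) (Real.exp_pos _).le

theorem integral_Ioi_integral_Ioi_comp_sub_mul_exp {k : ℝ → ℝ} (hk : Continuous k) {B : ℝ}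
    (hB : ∀ t, |k t| ≤ B) (hk_even : k.Even) {a : ℝ} (ha : 0 < a) :
    ∫ x in Ioi 0, ∫ y in Ioi 0, k (x - y) * Real.exp (-a * (x + y))
      = (∫ t in Ioi 0, k t * Real.exp (-a * t)) / a := by
  have hsymm : ∀ x y,
      k (x - y) * Real.exp (-a * (x + y)) = k (y - x) * Real.exp (-a * (y + x)) :=
    fun x y => by rw [← neg_sub, hk_even, add_comm]
  rw [integral_integral_eq_two_mul_integral_integral_Ioi
    (integrable_prod_comp_sub_mul_exp hk hB ha) hsymm]
  have hinner : ∀ x ∈ Ioi (0 : ℝ), ∫ y in Ioi x, k (x - y) * Real.exp (-a * (x + y))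
      ∂(volume.restrict (Ioi 0))
        = Real.exp (-(2 * a) * x) * ∫ t in Ioi 0, k t * Real.exp (-a * t) := by
    intro x hx
    rw [Measure.restrict_restrict measurableSet_Ioi, Ioi_inter_Ioi, sup_eq_left.2 (le_of_lt hx),
      setIntegral_Ioi_eq_setIntegral_Ioi_zero_add, ← integral_const_mul]
    refine setIntegral_congr_fun measurableSet_Ioi fun t _ => ?_
    rw [show x - (t + x) = -t by ring, hk_even, mul_left_comm, ← Real.exp_add]
    congr 2
    ring
  rw [setIntegral_congr_fun measurableSet_Ioi hinner, integral_mul_const,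
    integral_exp_mul_Ioi (by linarith) 0, mul_zero, Real.exp_zero]
  field_simp

theorem integral_pow_mul_exp_neg_mul_Ioi (n : ℕ) {c : ℝ} (hc : 0 < c) :
    ∫ t in Ioi 0, t ^ n * Real.exp (-c * t) = n ! / c ^ (n + 1) := by
  have h := Real.integral_rpow_mul_exp_neg_mul_Ioi (a := n + 1) (by positivity) hc
  rw [add_sub_cancel_right, Real.Gamma_nat_eq_factorial, ← Nat.cast_succ, Real.rpow_natCast,
    div_pow, one_pow, one_div_mul_eq_div] at h
  rw [← h]
  refine setIntegral_congr_fun measurableSet_Ioi fun t _ => ?_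
  rw [Real.rpow_natCast, neg_mul]

theorem integrableOn_pow_mul_exp_neg_mul_Ioi (n : ℕ) {c : ℝ} (hc : 0 < c) :
    IntegrableOn (fun t => t ^ n * Real.exp (-c * t)) (Ioi 0) :=
  Integrable.of_integral_ne_zero <| by
    rw [integral_pow_mul_exp_neg_mul_Ioi n hc]; positivity

theorem integral_one_sub_sq_mul_exp_neg_mul_Ioi {c : ℝ} (hc : 0 < c) :
    ∫ t in Ioi 0, (1 - t) ^ 2 * Real.exp (-c * t) = (c ^ 2 - 2 * c + 2) / c ^ 3 := by
  have hI (n : ℕ) := integrableOn_pow_mul_exp_neg_mul_Ioi n hc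
  have hexpand : ∀ t : ℝ, (1 - t) ^ 2 * Real.exp (-c * t) = t ^ 0 * Real.exp (-c * t)
      - 2 * (t ^ 1 * Real.exp (-c * t)) + t ^ 2 * Real.exp (-c * t) := fun t => by ring
  simp_rw [hexpand]
  rw [integral_add, integral_sub, integral_const_mul, integral_pow_mul_exp_neg_mul_Ioi 0 hc,
    integral_pow_mul_exp_neg_mul_Ioi 1 hc, integral_pow_mul_exp_neg_mul_Ioi 2 hc]
  · field_simp
    ring
  exacts [hI 0, (hI 1).const_mul 2, (hI 0).sub ((hI 1).const_mul 2), hI 2]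

theorem abs_one_sub_mul_exp_neg_le_one {s : ℝ} (hs : 0 ≤ s) :
    |(1 - s) * Real.exp (-s)| ≤ 1 := by
  have hexp : |1 - s| ≤ Real.exp s :=
    (abs_le.2 ⟨by linarith, by linarith⟩ : |1 - s| ≤ 1 + s).trans
      (by linarith [Real.add_one_le_exp s])
  calc |(1 - s) * Real.exp (-s)| = |1 - s| * Real.exp (-s) := by rw [abs_mul, Real.abs_exp]
    _ ≤ Real.exp s * Real.exp (-s) := mul_le_mul_of_nonneg_right hexp (Real.exp_pos _).le
    _ = 1 := by rw [← Real.exp_add, add_neg_cancel, Real.exp_zero]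

/-- The asymptotic variance of the rescaled MMD statistic for the transformed
Ornstein–Uhlenbeck kernel. -/
theorem stmt_8 (γ : ℝ) (hγ : γ < 1) :
    2 * ∫ x in Ioi (0 : ℝ), ∫ y in Ioi (0 : ℝ),
        ((1 / 2) * (1 - |x - y|) * Real.exp (-|x - y|)) ^ 2 *
          Real.exp (-(1 - γ) * (x + y))
      = (5 - 4 * γ + γ ^ 2) / (2 * (γ - 3) ^ 3 * (γ - 1)) := by
  set k : ℝ → ℝ := fun t => ((1 / 2) * (1 - |t|) * Real.exp (-|t|)) ^ 2 with hk
  have hk_cont : Continuous k := by fun_prop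
  have hk_bdd : ∀ t, |k t| ≤ 1 := fun t => by
    have hbound := abs_one_sub_mul_exp_neg_le_one (abs_nonneg t)
    simp only [hk, abs_pow]
    rw [mul_assoc, abs_mul, abs_of_pos (one_half_pos (α := ℝ))]
    exact pow_le_one₀ (by positivity) (by linarith)
  have hk_even : k.Even := fun t => by simp only [hk, abs_neg]
  have hlaplace : ∫ t in Ioi 0, k t * Real.exp (-(1 - γ) * t)
      = 1 / 4 * (((3 - γ) ^ 2 - 2 * (3 - γ) + 2) / (3 - γ) ^ 3) := by
    rw [setIntegral_congr_fun measurableSet_Ioi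
        (g := fun t => 1 / 4 * ((1 - t) ^ 2 * Real.exp (-(3 - γ) * t))) fun t ht => ?_,
      integral_const_mul, integral_one_sub_sq_mul_exp_neg_mul_Ioi (by linarith)]
    have hexp : Real.exp (-(3 - γ) * t) = Real.exp (-t) ^ 2 * Real.exp (-(1 - γ) * t) := by
      rw [sq, ← Real.exp_add, ← Real.exp_add]
      ring_nf
    simp only [hk, abs_of_pos (show (0:ℝ) < t from ht), hexp]
    ring
  calc _ = 2 * ((∫ t in Ioi 0, k t * Real.exp (-(1 - γ) * t)) / (1 - γ)) :=
        congrArg (2 * ·) (integral_Ioi_integral_Ioi_comp_sub_mul_exp hk_cont hk_bdd hk_even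
          (by linarith))
    _ = _ := by
      rw [hlaplace]
      have : 3 - γ ≠ 0 := by linarith
      have : γ - 3 ≠ 0 := by linarith
      have : 1 - γ ≠ 0 := by linarith
      have : γ - 1 ≠ 0 := by linarith
      field_simp
      ring
end

section
/- Let F, G be probability distributions on (0,∞), S = 1−F, H defined by 1−H(x) = (1−G(x))S(x), and K a symmetric kernel with ∫∫ K(x,y)²/((1−G(x−))(1−G(y−))) dF(x)dF(y) < ∞. Let R₁ be the backward operator applied to the first coordinate: (R₁K)(x,y) = (1/S(x))∫_x^∞ K(s,y)dF(s). Assuming the bound E[(S(X)/S(X−))(Rg)(X)²] ≤ 4E[g(X)²] for all g ∈ L²(F), it holds that ∫∫ (R₁K)(x,y)² S(x) / ((1−H(x−))(1−G(y−))) dF(x)dF(y) ≤ 4 ∫∫ K(x,y)²/((1−G(x−))(1−G(y−))) dF(x)dF(y) < ∞. -/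
/-!
Fix `y` and put `g s = |K s y| / √(w s)`. Since `w` is antitone, `√(w s) ≤ √(w x)` for `s > x`,
so `|∫_{(x,∞)} K s y dμ| ≤ √(w x) ∫_{(x,∞)} g dμ`; this bounds the `y`-section of the left
integrand by `(S x / Sm x) (R g)(x)² / w y`, where `R = backwardOp`. The assumed bound on `R`, applied to
`g ∈ L²(μ)`, controls its `x`-integral by `4 ∫ g² dμ / w y = 4 ∫ K(x,y)² / (w x w y) dμ(x)`,
and Tonelli integrates over `y`.
-/

open MeasureTheory Set Filter Function Topology

noncomputable def backwardOp (μ : Measure ℝ) (S g : ℝ → ℝ) (x : ℝ) : ℝ :=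
  (1 / S x) * ∫ s in Ioi x, g s ∂μ

lemma measurable_setIntegral_Ioi_s18 {α : Type*} [MeasurableSpace α] (μ : Measure ℝ) [SFinite μ]
    {f : ℝ → α → ℝ} (hf : Measurable (uncurry f)) :
    Measurable fun p : ℝ × α => ∫ s in Ioi p.1, f s p.2 ∂μ := by
  have hF : Measurable fun q : (ℝ × α) × ℝ => (Ioi q.1.1).indicator (f · q.1.2) q.2 := by
    simp only [indicator_apply, mem_Ioi]
    exact Measurable.ite (measurableSet_lt (measurable_fst.comp measurable_fst) measurable_snd)
      (hf.comp (measurable_snd.prodMk (measurable_snd.comp measurable_fst))) measurable_const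
  convert (hF.stronglyMeasurable.integral_prod_right' (ν := μ)).measurable using 2 with p
  exact (integral_indicator measurableSet_Ioi).symm

lemma tendsto_integral_indicator_abs_le {α : Type*} [MeasurableSpace α] {μ : Measure α}
    {g : α → ℝ} (hg : Measurable g) (hgi : Integrable g μ) :
    Tendsto (fun n : ℕ => ∫ s, {s | |g s| ≤ n}.indicator g s ∂μ) atTop (𝓝 (∫ s, g s ∂μ)) := by
  refine tendsto_integral_of_dominated_convergence (fun s => ‖g s‖)
    (fun n => (hg.indicator (measurableSet_le hg.abs measurable_const)).aestronglyMeasurable)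
    hgi.norm (fun n => ae_of_all _ (norm_indicator_le_norm_self g)) (ae_of_all _ fun s => ?_)
  refine tendsto_atTop_of_eventually_const (i₀ := ⌈|g s|⌉₊) fun n hn => ?_
  exact indicator_of_mem (show s ∈ {s | |g s| ≤ (n : ℝ)} from
    (Nat.le_ceil _).trans (Nat.cast_le.mpr hn)) g

section Survival

variable {μ : Measure ℝ} {S Sm : ℝ → ℝ}

lemma antitone_of_eq_measureReal_Ioi [IsFiniteMeasure μ] (hS : ∀ x, S x = μ.real (Ioi x)) :
    Antitone S := fun a b hab => by
  simp only [hS]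
  exact measureReal_mono (Ioi_subset_Ioi hab)

lemma antitone_of_eq_measureReal_Ici [IsFiniteMeasure μ] (hSm : ∀ x, Sm x = μ.real (Ici x)) :
    Antitone Sm := fun a b hab => by
  simp only [hSm]
  exact measureReal_mono (Ici_subset_Ici.mpr hab)

lemma measurable_backwardOp [SFinite μ] (hS : Measurable S) {g : ℝ → ℝ} (hg : Measurable g) :
    Measurable (backwardOp μ S g) :=
  (measurable_const.div hS).mul <|
    (measurable_setIntegral_Ioi_s18 μ (f := fun s (_ : ℝ) => g s) (hg.comp measurable_fst)).comp
      (measurable_id.prodMk measurable_id)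

lemma abs_backwardOp_le_of_abs_le [IsFiniteMeasure μ] (hS : ∀ x, S x = μ.real (Ioi x))
    {g : ℝ → ℝ} {C : ℝ} (hg : ∀ s, |g s| ≤ C) (x : ℝ) : |backwardOp μ S g x| ≤ C := by
  rw [backwardOp, abs_mul, hS]
  rcases measureReal_nonneg.eq_or_lt with h | h
  · rw [← h]
    simpa using (abs_nonneg _).trans (hg 0)
  · calc |1 / μ.real (Ioi x)| * |∫ s in Ioi x, g s ∂μ|
        ≤ 1 / μ.real (Ioi x) * (C * μ.real (Ioi x)) := by
          rw [abs_of_pos (one_div_pos.2 h)]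
          gcongr
          exact norm_setIntegral_le_of_norm_le_const (f := g) (measure_lt_top _ _) fun s _ => hg s
      _ = C := by field_simp

lemma abs_backwardOp_le_mul {k g : ℝ → ℝ} {c x : ℝ} (hS : 0 ≤ S x)
    (hg : IntegrableOn g (Ioi x) μ) (hkg : ∀ s ∈ Ioi x, |k s| ≤ c * g s) :
    |backwardOp μ S k x| ≤ c * backwardOp μ S g x := by
  rw [backwardOp, backwardOp, abs_mul, abs_of_nonneg (one_div_nonneg.2 hS), mul_left_comm,
    ← integral_const_mul]
  gcongr
  exact norm_integral_le_of_norm_le (f := k) (hg.const_mul c)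
    (ae_restrict_of_forall_mem measurableSet_Ioi hkg)

lemma sq_backwardOp_le_mul_sq {w : ℝ → ℝ} (hw_pos : ∀ x, 0 < w x) (hw_anti : Antitone w)
    {k : ℝ → ℝ} {x : ℝ} (hS : 0 ≤ S x) (hg : IntegrableOn (fun s => |k s| / √(w s)) (Ioi x) μ) :
    backwardOp μ S k x ^ 2 ≤ w x * backwardOp μ S (fun s => |k s| / √(w s)) x ^ 2 := by
  have hR_le : |backwardOp μ S k x| ≤ √(w x) * backwardOp μ S (fun s => |k s| / √(w s)) x :=
    abs_backwardOp_le_mul hS hg fun s hs => by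
      rw [← mul_div_assoc, le_div_iff₀ (Real.sqrt_pos.2 (hw_pos s)), mul_comm (√(w x))]
      gcongr
      exact hw_anti (le_of_lt hs)
  rw [← sq_abs, ← Real.sq_sqrt (hw_pos x).le, ← mul_pow]
  exact pow_le_pow_left₀ (abs_nonneg _) hR_le 2

variable [IsFiniteMeasure μ]

lemma div_mem_unitInterval_of_survival (hS : ∀ x, S x = μ.real (Ioi x))
    (hSm : ∀ x, Sm x = μ.real (Ici x)) (x : ℝ) : S x / Sm x ∈ unitInterval := by
  rw [hS, hSm]
  exact ⟨by positivity, div_le_one_of_le₀ (measureReal_mono Ioi_subset_Ici_self) measureReal_nonneg⟩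

lemma measurable_survival_div_mul_backwardOp_sq (hS : ∀ x, S x = μ.real (Ioi x))
    (hSm : ∀ x, Sm x = μ.real (Ici x)) {g : ℝ → ℝ} (hg : Measurable g) :
    Measurable fun x => S x / Sm x * backwardOp μ S g x ^ 2 :=
  ((antitone_of_eq_measureReal_Ioi hS).measurable.div
    (antitone_of_eq_measureReal_Ici hSm).measurable).mul
    ((measurable_backwardOp (antitone_of_eq_measureReal_Ioi hS).measurable hg).pow_const 2)

lemma integrable_survival_div_mul_backwardOp_sq (hS : ∀ x, S x = μ.real (Ioi x))
    (hSm : ∀ x, Sm x = μ.real (Ici x)) {g : ℝ → ℝ} (hg : Measurable g) {M : ℝ}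
    (hgM : ∀ s, |g s| ≤ M) : Integrable (fun x => S x / Sm x * backwardOp μ S g x ^ 2) μ := by
  refine .of_bound (measurable_survival_div_mul_backwardOp_sq hS hSm hg).aestronglyMeasurable
    (M ^ 2) (ae_of_all _ fun x => ?_)
  obtain ⟨hratio0, hratio1⟩ := div_mem_unitInterval_of_survival hS hSm x
  rw [Real.norm_eq_abs, abs_mul, abs_of_nonneg hratio0, abs_pow]
  exact (mul_le_of_le_one_left (by positivity) hratio1).trans
    (pow_le_pow_left₀ (abs_nonneg _) (abs_backwardOp_le_of_abs_le hS hgM x) 2)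

/-- The bound `hR` only constrains real integrals, which are junk when the integrand fails to
be integrable; truncating `g` makes the integrand bounded, and Fatou's lemma passes to the limit. -/
lemma lintegral_backwardOp_sq_le (hS : ∀ x, S x = μ.real (Ioi x))
    (hSm : ∀ x, Sm x = μ.real (Ici x)) {C : ℝ} (hC : 0 ≤ C)
    (hR : ∀ g : ℝ → ℝ, MemLp g 2 μ →
      ∫ x, S x / Sm x * backwardOp μ S g x ^ 2 ∂μ ≤ C * ∫ x, g x ^ 2 ∂μ)
    {g : ℝ → ℝ} (hg : Measurable g) (hg2 : MemLp g 2 μ) :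
    ∫⁻ x, ENNReal.ofReal (S x / Sm x * backwardOp μ S g x ^ 2) ∂μ
      ≤ ENNReal.ofReal (C * ∫ x, g x ^ 2 ∂μ) := by
  set trunc : ℕ → ℝ → ℝ := fun n => {s | |g s| ≤ n}.indicator g
  have hset (n : ℕ) : MeasurableSet {s | |g s| ≤ n} := measurableSet_le hg.abs measurable_const
  have hmeas (n : ℕ) : Measurable (trunc n) := hg.indicator (hset n)
  have htrunc (n : ℕ) : ∫⁻ x, ENNReal.ofReal (S x / Sm x * backwardOp μ S (trunc n) x ^ 2) ∂μ
      ≤ ENNReal.ofReal (C * ∫ x, g x ^ 2 ∂μ) := by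
    have hbdd (s : ℝ) : |trunc n s| ≤ n := by by_cases hs : |g s| ≤ n <;> simp [trunc, hs]
    rw [← ofReal_integral_eq_lintegral_ofReal
      (integrable_survival_div_mul_backwardOp_sq hS hSm (hmeas n) hbdd)
      (ae_of_all _ fun x => mul_nonneg (div_mem_unitInterval_of_survival hS hSm x).1 (sq_nonneg _))]
    refine ENNReal.ofReal_le_ofReal ((hR _ (hg2.indicator (hset n))).trans ?_)
    refine mul_le_mul_of_nonneg_left (integral_mono (hg2.indicator (hset n)).integrable_sq
      hg2.integrable_sq fun s => ?_) hC
    by_cases hs : |g s| ≤ n <;> simp [hs, sq_nonneg]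
  have hlim (x : ℝ) : Tendsto (fun n => S x / Sm x * backwardOp μ S (trunc n) x ^ 2) atTop
      (𝓝 (S x / Sm x * backwardOp μ S g x ^ 2)) :=
    (((tendsto_integral_indicator_abs_le hg
      (hg2.integrable one_le_two).restrict).const_mul _).pow 2).const_mul _
  calc ∫⁻ x, ENNReal.ofReal (S x / Sm x * backwardOp μ S g x ^ 2) ∂μ
      = ∫⁻ x, liminf (fun n => ENNReal.ofReal (S x / Sm x * backwardOp μ S (trunc n) x ^ 2))
          atTop ∂μ :=
        lintegral_congr fun x => ((ENNReal.continuous_ofReal.tendsto _).comp (hlim x)).liminf_eq.symm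
    _ ≤ liminf (fun n => ∫⁻ x, ENNReal.ofReal (S x / Sm x * backwardOp μ S (trunc n) x ^ 2) ∂μ)
          atTop :=
        lintegral_liminf_le fun n => ENNReal.measurable_ofReal.comp
          (measurable_survival_div_mul_backwardOp_sq hS hSm (hmeas n))
    _ ≤ ENNReal.ofReal (C * ∫ x, g x ^ 2 ∂μ) :=
        (liminf_le_liminf (.of_forall htrunc)).trans_eq (liminf_const _)

lemma lintegral_backwardOp_sq_div_le (hS : ∀ x, S x = μ.real (Ioi x))
    (hSm : ∀ x, Sm x = μ.real (Ici x)) {C : ℝ} (hC : 0 ≤ C)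
    (hR : ∀ g : ℝ → ℝ, MemLp g 2 μ →
      ∫ x, S x / Sm x * backwardOp μ S g x ^ 2 ∂μ ≤ C * ∫ x, g x ^ 2 ∂μ)
    {w : ℝ → ℝ} (hw_pos : ∀ x, 0 < w x) (hw_anti : Antitone w)
    {k : ℝ → ℝ} (hk : Measurable k) {c : ℝ} (hc : 0 < c)
    (hkw : Integrable (fun x => k x ^ 2 / (w x * c)) μ) :
    ∫⁻ x, ENNReal.ofReal (backwardOp μ S k x ^ 2 * S x / (Sm x * w x * c)) ∂μ
      ≤ ENNReal.ofReal (C * ∫ x, k x ^ 2 / (w x * c) ∂μ) := by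
  set g : ℝ → ℝ := fun s => |k s| / √(w s)
  have hg : Measurable g := hk.abs.div hw_anti.measurable.sqrt
  have hg_sq (s : ℝ) : g s ^ 2 = c * (k s ^ 2 / (w s * c)) := by
    simp only [g, div_pow, sq_abs, Real.sq_sqrt (hw_pos s).le]
    field_simp
  have hg2 : MemLp g 2 μ := (memLp_two_iff_integrable_sq hg.aestronglyMeasurable).2
    ((hkw.const_mul c).congr (ae_of_all _ fun s => (hg_sq s).symm))
  have hpt (x : ℝ) : backwardOp μ S k x ^ 2 * S x / (Sm x * w x * c)
      ≤ S x / Sm x * backwardOp μ S g x ^ 2 * c⁻¹ := by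
    have hS0 : 0 ≤ S x := hS x ▸ measureReal_nonneg
    have hSm0 : 0 ≤ Sm x := hSm x ▸ measureReal_nonneg
    calc backwardOp μ S k x ^ 2 * S x / (Sm x * w x * c)
        ≤ w x * backwardOp μ S g x ^ 2 * S x / (Sm x * w x * c) := by
          have := hw_pos x
          gcongr
          exact sq_backwardOp_le_mul_sq hw_pos hw_anti hS0 (hg2.integrable one_le_two).integrableOn
      _ = S x / Sm x * backwardOp μ S g x ^ 2 * c⁻¹ := by
        have := (hw_pos x).ne'
        field_simp
  calc ∫⁻ x, ENNReal.ofReal (backwardOp μ S k x ^ 2 * S x / (Sm x * w x * c)) ∂μ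
      ≤ ∫⁻ x, ENNReal.ofReal (S x / Sm x * backwardOp μ S g x ^ 2) * ENNReal.ofReal c⁻¹ ∂μ := by
        refine lintegral_mono fun x => ?_
        rw [← ENNReal.ofReal_mul' (inv_nonneg.2 hc.le)]
        exact ENNReal.ofReal_le_ofReal (hpt x)
    _ ≤ ENNReal.ofReal (C * ∫ x, g x ^ 2 ∂μ) * ENNReal.ofReal c⁻¹ := by
        rw [lintegral_mul_const' _ _ ENNReal.ofReal_ne_top]
        gcongr
        exact lintegral_backwardOp_sq_le hS hSm hC hR hg hg2
    _ = ENNReal.ofReal (C * ∫ x, k x ^ 2 / (w x * c) ∂μ) := by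
        rw [← ENNReal.ofReal_mul' (inv_nonneg.2 hc.le)]
        simp_rw [hg_sq, integral_const_mul]
        field_simp

end Survival

lemma integral_integral_le_of_lintegral_le {α β : Type*} [MeasurableSpace α] [MeasurableSpace β]
    {μ : Measure α} {ν : Measure β} [SFinite μ] [SFinite ν] {f : α → β → ℝ} {g : β → ℝ}
    (hf : Measurable (uncurry f)) (hf0 : ∀ x y, 0 ≤ f x y) (hg : Integrable g ν)
    (hg0 : 0 ≤ᵐ[ν] g) (hfg : ∀ᵐ y ∂ν, ∫⁻ x, ENNReal.ofReal (f x y) ∂μ ≤ ENNReal.ofReal (g y)) :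
    ∫ x, ∫ y, f x y ∂ν ∂μ ≤ ∫ y, g y ∂ν := by
  have hlin : ∫⁻ p, ENNReal.ofReal (uncurry f p) ∂(μ.prod ν) ≤ ENNReal.ofReal (∫ y, g y ∂ν) := by
    rw [lintegral_prod_symm (fun p => ENNReal.ofReal (uncurry f p))
        (ENNReal.measurable_ofReal.comp hf).aemeasurable,
      ofReal_integral_eq_lintegral_ofReal hg hg0]
    exact lintegral_mono_ae hfg
  have hf0' : 0 ≤ᵐ[μ.prod ν] uncurry f := ae_of_all _ fun p => hf0 p.1 p.2
  have hint : Integrable (uncurry f) (μ.prod ν) :=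
    ⟨hf.aestronglyMeasurable,
      (hasFiniteIntegral_iff_ofReal hf0').2 (hlin.trans_lt ENNReal.ofReal_lt_top)⟩
  calc ∫ x, ∫ y, f x y ∂ν ∂μ = (∫⁻ p, ENNReal.ofReal (uncurry f p) ∂(μ.prod ν)).toReal := by
        rw [integral_integral hint]
        exact integral_eq_lintegral_of_nonneg_ae hf0' hf.aestronglyMeasurable
    _ ≤ ∫ y, g y ∂ν :=
        ENNReal.toReal_le_of_le_ofReal (integral_nonneg_of_ae hg0) hlin

/-- Here `μ` is the law `F` of the survival times, `S x = μ(x,∞)`, `Sm x = μ[x,∞) = S(x−)`,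
`w x` stands for `1 − G(x−)`, and `1 − H(x−) = S(x−)·(1−G(x−)) = Sm x * w x`. -/
theorem stmt_18_general (μ : Measure ℝ) [IsProbabilityMeasure μ]
    (S Sm : ℝ → ℝ) (hS : ∀ x, S x = (μ (Ioi x)).toReal)
    (hSm : ∀ x, Sm x = (μ (Ici x)).toReal)
    (w : ℝ → ℝ) (hw_pos : ∀ x, 0 < w x) (hw_anti : Antitone w)
    (K : ℝ → ℝ → ℝ)
    (hKmeas : Measurable fun p : ℝ × ℝ => K p.1 p.2)
    (hKint : Integrable (fun p : ℝ × ℝ => K p.1 p.2 ^ 2 / (w p.1 * w p.2)) (μ.prod μ))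
    (hR : ∀ g : ℝ → ℝ, MemLp g 2 μ →
      ∫ x, (S x / Sm x) * ((1 / S x) * ∫ s in Ioi x, g s ∂μ) ^ 2 ∂μ
        ≤ 4 * ∫ x, g x ^ 2 ∂μ) :
    (∫ x, ∫ y, ((1 / S x) * ∫ s in Ioi x, K s y ∂μ) ^ 2 * S x / (Sm x * w x * w y) ∂μ ∂μ)
      ≤ 4 * ∫ x, ∫ y, K x y ^ 2 / (w x * w y) ∂μ ∂μ := by
  have hS_meas : Measurable S := (antitone_of_eq_measureReal_Ioi hS).measurable
  have hf_meas : Measurable fun p : ℝ × ℝ =>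
      ((1 / S p.1) * ∫ s in Ioi p.1, K s p.2 ∂μ) ^ 2 * S p.1 / (Sm p.1 * w p.1 * w p.2) := by
    have := measurable_setIntegral_Ioi_s18 μ hKmeas
    have := (antitone_of_eq_measureReal_Ici hSm).measurable
    have := hw_anti.measurable
    fun_prop
  have hf0 (x y : ℝ) : 0 ≤ ((1 / S x) * ∫ s in Ioi x, K s y ∂μ) ^ 2 * S x / (Sm x * w x * w y) := by
    rw [hS, hSm]
    have := hw_pos x
    have := hw_pos y
    positivity
  refine (integral_integral_le_of_lintegral_le hf_meas hf0 (hKint.integral_prod_right.const_mul 4)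
    (ae_of_all _ fun y => mul_nonneg zero_le_four (integral_nonneg fun x =>
      div_nonneg (sq_nonneg _) (mul_pos (hw_pos x) (hw_pos y)).le)) ?_).trans_eq ?_
  · filter_upwards [hKint.prod_left_ae] with y hy
    exact lintegral_backwardOp_sq_div_le hS hSm zero_le_four hR hw_pos hw_anti
      (hKmeas.comp (measurable_id.prodMk measurable_const)) (hw_pos y) hy
  · rw [integral_const_mul, integral_integral_swap (f := fun x y => K x y ^ 2 / (w x * w y)) hKint]

/-- Weighted bound for the backward operator applied in the first coordinate:
`∫∫ (R₁K)(x,y)² S(x)/((1−H(x−))(1−G(y−))) ≤ 4 ∫∫ K(x,y)²/((1−G(x−))(1−G(y−))) < ∞`.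
Here `μ` is the law `F` of the survival times, `S x = μ(x,∞)`, `Sm x = μ[x,∞) = S(x−)`,
`w x` stands for `1 − G(x−)`, and `1 − H(x−) = S(x−)·(1−G(x−)) = Sm x * w x`. -/
theorem stmt_18 (μ : Measure ℝ) [IsProbabilityMeasure μ]
    (S Sm : ℝ → ℝ) (hS : ∀ x, S x = (μ (Ioi x)).toReal)
    (hSm : ∀ x, Sm x = (μ (Ici x)).toReal)
    (w : ℝ → ℝ) (hw_pos : ∀ x, 0 < w x) (hw_le : ∀ x, w x ≤ 1) (hw_anti : Antitone w)
    (K : ℝ → ℝ → ℝ) (hsymm : ∀ x y, K x y = K y x)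
    (hKmeas : Measurable fun p : ℝ × ℝ => K p.1 p.2)
    (hKint : Integrable (fun p : ℝ × ℝ => K p.1 p.2 ^ 2 / (w p.1 * w p.2)) (μ.prod μ))
    (hR : ∀ g : ℝ → ℝ, MemLp g 2 μ →
      ∫ x, (S x / Sm x) * ((1 / S x) * ∫ s in Ioi x, g s ∂μ) ^ 2 ∂μ
        ≤ 4 * ∫ x, g x ^ 2 ∂μ) :
    (∫ x, ∫ y, ((1 / S x) * ∫ s in Ioi x, K s y ∂μ) ^ 2 * S x / (Sm x * w x * w y) ∂μ ∂μ)
      ≤ 4 * ∫ x, ∫ y, K x y ^ 2 / (w x * w y) ∂μ ∂μ :=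
  stmt_18_general μ S Sm hS hSm w hw_pos hw_anti K hKmeas hKint hR
end
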